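/- arXiv:1905.07582 — 2 statements merged into one kernel-verified Lean document; each statement's English description precedes it below -/
import Mathlib

section
/- Let α ∈ (0, 1/4) be irrational with convergent denominators (q_s)_{s≥0}, and write α_s = ‖q_s α‖ (distance from q_s α to ℤ) and ⟨q_s α⟩ for the representative of q_s α mod 1 in [−1/2, 1/2). If S ∈ ℕ and (b_s)_{1≤s≤S} are integers with 0 ≤ b_s ≤ ⌊q_{s+1}/q_s⌋ for each s, then Σ_{s=1}^S b_s ⟨q_s α⟩ lies in [−1/2, 1/2), and hence ⟨(Σ_{s=1}^S b_s q_s) α⟩ = Σ_{s=1}^S b_s ⟨q_s α⟩. -/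
/-- The representative of `x` mod 1 lying in `[-1/2, 1/2)`. -/
noncomputable def repr1 (x : ℝ) : ℝ := x - round x

/-!
Let `e_n = q_n α - p_n`. The signs of the `e_n` alternate, `|e_n| ≤ 1 / q_{n+1} ≤ 1/4`, so
`⟨q_n α⟩ = e_n`; and since `q_n < q_{n+1}` (for `n = 0` because `α < 1/2`), the partial quotient
`a_{n+1}` equals `⌊q_{n+2} / q_{n+1}⌋`, giving `e_{n+2} = a_{n+1} e_{n+1} + e_n`. In terms of
`θ_n = |e_n|` this is `θ_n = a_{n+1} θ_{n+1} + θ_{n+2}`, and splitting off the first term shows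
inductively that the alternating tail `±∑_{s > j} b_s e_s` lies in `[-θ_{j+1}, θ_j]`. Hence
`∑ b_s ⟨q_s α⟩ ∈ [-θ_0, θ_1] ⊆ [-1/4, 1/4]`; as it differs from `(∑ b_s q_s) α` by an integer,
it is also its representative mod 1.
-/

open Finset
open GenContFract (of)

theorem alternating_sum_mem_Icc {θ c b : ℕ → ℝ} (hθ : ∀ n, 0 ≤ θ n)
    (hrec : ∀ n, c (n + 1) * θ (n + 1) + θ (n + 2) ≤ θ n) :
    ∀ n j, (∀ i < n, 0 ≤ b (j + 1 + i) ∧ b (j + 1 + i) ≤ c (j + 1 + i)) →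
      ∑ i ∈ range n, (-1) ^ i * (b (j + 1 + i) * θ (j + 1 + i)) ∈ Set.Icc (-θ (j + 1)) (θ j)
  | 0, j, _ => by simp [hθ j, hθ (j + 1)]
  | n + 1, j, hb => by
    obtain ⟨hb₀, hbc⟩ := hb 0 n.succ_pos
    obtain ⟨ih₁, ih₂⟩ := alternating_sum_mem_Icc hθ hrec n (j + 1) fun i hi => by
      simpa only [add_assoc, add_comm 1] using hb (i + 1) (by omega)
    have hshift : ∑ i ∈ range n, (-1) ^ (i + 1) * (b (j + 1 + (i + 1)) * θ (j + 1 + (i + 1))) =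
        -∑ i ∈ range n, (-1) ^ i * (b (j + 1 + 1 + i) * θ (j + 1 + 1 + i)) := by
      rw [← sum_neg_distrib]
      refine sum_congr rfl fun i _ => ?_
      rw [show j + 1 + (i + 1) = j + 1 + 1 + i by omega]
      ring
    rw [sum_range_succ', hshift]
    simp only [pow_zero, one_mul, add_zero]
    have hbθ_nonneg := mul_nonneg hb₀ (hθ (j + 1))
    have hbθ_le := mul_le_mul_of_nonneg_right hbc (hθ (j + 1))
    exact ⟨by linarith, by linarith [hrec j]⟩

theorem sum_Icc_mul_mem_Icc_of_alternating {e c b : ℕ → ℝ} (he : ∀ n, 0 ≤ (-1) ^ n * e n)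
    (hrec : ∀ n, e (n + 2) = c (n + 1) * e (n + 1) + e n) (S : ℕ)
    (hb : ∀ s, 1 ≤ s → s ≤ S → 0 ≤ b s ∧ b s ≤ c s) :
    ∑ s ∈ Icc 1 S, b s * e s ∈ Set.Icc (-e 0) (-e 1) := by
  set θ : ℕ → ℝ := fun n => (-1) ^ n * e n
  have he_eq (n : ℕ) : e n = (-1) ^ n * θ n := by
    simp only [θ, ← mul_assoc, ← mul_pow]
    norm_num
  have hθrec (n : ℕ) : c (n + 1) * θ (n + 1) + θ (n + 2) ≤ θ n := by
    refine le_of_eq ?_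
    simp only [θ, hrec n, pow_succ]
    ring
  have key := alternating_sum_mem_Icc (θ := θ) he hθrec S 0 fun i hi =>
    hb (0 + 1 + i) (by omega) (by omega)
  have hsum : ∑ s ∈ Icc 1 S, b s * e s =
      -∑ i ∈ range S, (-1) ^ i * (b (0 + 1 + i) * θ (0 + 1 + i)) := by
    rw [← Ico_add_one_right_eq_Icc, sum_Ico_eq_sum_range, ← sum_neg_distrib]
    refine sum_congr (by simp) fun i _ => ?_
    rw [he_eq, zero_add, add_comm 1, pow_succ]
    ring
  rw [hsum, he_eq 0, he_eq 1]
  simp only [pow_zero, pow_one, one_mul, neg_one_mul, zero_add] at key ⊢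
  exact ⟨by linarith [key.2], by linarith [key.1]⟩

theorem repr1_eq_of_eq_intCast_add {x y : ℝ} (z : ℤ) (hx : x = z + y)
    (hy : y ∈ Set.Ico (-(1 / 2)) (1 / 2)) : repr1 x = y := by
  rw [repr1, hx, round_intCast_add, round_eq_zero_iff.mpr hy]
  push_cast
  ring

theorem sum_mul_eq_intCast_add_sum_mul_repr1 {ι : Type*} (s : Finset ι) (b : ι → ℤ) (x : ι → ℝ) :
    ∑ i ∈ s, (b i : ℝ) * x i =
      ((∑ i ∈ s, b i * round (x i) : ℤ) : ℝ) + ∑ i ∈ s, (b i : ℝ) * repr1 (x i) := by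
  push_cast
  rw [← sum_add_distrib]
  refine sum_congr rfl fun i _ => ?_
  rw [repr1]
  ring

namespace GenContFract

variable {ξ : ℝ}

theorem not_terminatedAt_of_irrational (hξ : Irrational ξ) (n : ℕ) : ¬(of ξ).TerminatedAt n :=
  fun h => by
    obtain ⟨q, hq⟩ := (terminates_iff_rat ξ).mp ⟨n, h⟩
    exact hξ ⟨q, hq.symm⟩

theorem exists_stream_eq_some_fr_ne_zero (hξ : Irrational ξ) (n : ℕ) :
    ∃ ifp, IntFractPair.stream ξ n = some ifp ∧ ifp.fr ≠ 0 := by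
  have h := not_terminatedAt_of_irrational hξ n
  rw [of_terminatedAt_n_iff_succ_nth_intFractPair_stream_eq_none,
    IntFractPair.succ_nth_stream_eq_none_iff] at h
  push Not at h
  obtain ⟨ifp, hifp⟩ := Option.ne_none_iff_exists'.mp h.1
  exact ⟨ifp, hifp, h.2 ifp hifp⟩

theorem exists_s_get?_eq_of_irrational (hξ : Irrational ξ) (n : ℕ) :
    ∃ a : ℤ, 1 ≤ a ∧ (of ξ).s.get? n = some ⟨1, a⟩ := by
  obtain ⟨ifp, h, -⟩ := exists_stream_eq_some_fr_ne_zero hξ (n + 1)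
  exact ⟨ifp.b, IntFractPair.one_le_succ_nth_stream_b h,
    get?_of_eq_some_of_succ_get?_intFractPair_stream h⟩

theorem exists_nums_dens_add_two (hξ : Irrational ξ) (n : ℕ) : ∃ a : ℤ, 1 ≤ a ∧
    (of ξ).nums (n + 2) = a * (of ξ).nums (n + 1) + (of ξ).nums n ∧
    (of ξ).dens (n + 2) = a * (of ξ).dens (n + 1) + (of ξ).dens n := by
  obtain ⟨a, ha, hs⟩ := exists_s_get?_eq_of_irrational hξ (n + 1)
  exact ⟨a, ha, by simpa using nums_recurrence hs rfl rfl,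
    by simpa using dens_recurrence hs rfl rfl⟩

theorem exists_int_eq_nums (hξ : Irrational ξ) : ∀ n, ∃ z : ℤ, (of ξ).nums n = z
  | 0 => ⟨⌊ξ⌋, by rw [zeroth_num_eq_h, of_h_eq_floor]⟩
  | 1 => by
    obtain ⟨a, -, hs⟩ := exists_s_get?_eq_of_irrational hξ 0
    exact ⟨a * ⌊ξ⌋ + 1, by rw [first_num_eq hs, of_h_eq_floor]; push_cast; ring⟩
  | n + 2 => by
    obtain ⟨a, -, hnum, -⟩ := exists_nums_dens_add_two hξ n
    obtain ⟨z₁, h₁⟩ := exists_int_eq_nums hξ (n + 1)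
    obtain ⟨z₀, h₀⟩ := exists_int_eq_nums hξ n
    exact ⟨a * z₁ + z₀, by rw [hnum, h₁, h₀]; push_cast; ring⟩

theorem one_le_dens (n : ℕ) : 1 ≤ (of ξ).dens n := by
  induction n with
  | zero => rw [zeroth_den_eq_one]
  | succ n ih => exact ih.trans of_den_mono

theorem dens_lt_dens_add_two (hξ : Irrational ξ) (n : ℕ) :
    (of ξ).dens (n + 1) < (of ξ).dens (n + 2) := by
  obtain ⟨a, ha, -, hden⟩ := exists_nums_dens_add_two hξ n
  have ha' : (1 : ℝ) ≤ a := by exact_mod_cast ha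
  rw [hden]
  nlinarith [one_le_dens (ξ := ξ) n, one_le_dens (ξ := ξ) (n + 1)]

theorem dens_one_eq_floor_inv (h₀ : 0 < ξ) (h₁ : ξ < 1) : (of ξ).dens 1 = ⌊ξ⁻¹⌋ := by
  have hfr : (IntFractPair.of ξ).fr = ξ := Int.fract_eq_self.mpr ⟨h₀.le, h₁⟩
  have hstream :=
    IntFractPair.stream_succ_of_some (IntFractPair.stream_zero ξ) (by rw [hfr]; exact h₀.ne')
  rw [first_den_eq (get?_of_eq_some_of_succ_get?_intFractPair_stream hstream), hfr]
  rfl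

noncomputable def convErr (ξ : ℝ) (n : ℕ) : ℝ := (of ξ).dens n * ξ - (of ξ).nums n

theorem convErr_eq_dens_mul_sub_convs (n : ℕ) :
    convErr ξ n = (of ξ).dens n * (ξ - (of ξ).convs n) := by
  have := (one_le_dens (ξ := ξ) n).trans_lt' one_pos
  rw [convErr, conv_eq_num_div_den]
  field_simp

theorem convErr_add_two (hξ : Irrational ξ) {n : ℕ} (hlt : (of ξ).dens n < (of ξ).dens (n + 1)) :
    convErr ξ (n + 2) =
      ⌊(of ξ).dens (n + 2) / (of ξ).dens (n + 1)⌋ * convErr ξ (n + 1) + convErr ξ n := by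
  obtain ⟨a, -, hnum, hden⟩ := exists_nums_dens_add_two hξ n
  have hpos : 0 < (of ξ).dens (n + 1) := (one_le_dens _).trans_lt' one_pos
  have hfloor : ⌊(of ξ).dens (n + 2) / (of ξ).dens (n + 1)⌋ = a := by
    rw [Int.floor_eq_iff, hden, le_div_iff₀ hpos, div_lt_iff₀ hpos]
    constructor <;> nlinarith [zero_le_of_den (v := ξ) (n := n)]
  rw [hfloor, convErr, convErr, convErr, hnum, hden]
  ring

theorem neg_one_pow_mul_convErr_pos (hξ : Irrational ξ) (n : ℕ) : 0 < (-1) ^ n * convErr ξ n := by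
  obtain ⟨ifp, hs, hfr⟩ := exists_stream_eq_some_fr_ne_zero hξ n
  have h := sub_convs_eq hs
  simp only [hfr, if_false] at h
  have hB : ((of ξ).contsAux (n + 1)).b = (of ξ).dens n := by
    rw [den_eq_conts_b, nth_cont_eq_succ_nth_contAux]
  rw [hB] at h
  have hB₀ : 0 < (of ξ).dens n := (one_le_dens n).trans_lt' one_pos
  have hfr₀ : 0 < ifp.fr⁻¹ := inv_pos.mpr ((IntFractPair.nth_stream_fr_nonneg hs).lt_of_ne' hfr)
  have hX : 0 < ifp.fr⁻¹ * (of ξ).dens n + ((of ξ).contsAux n).b :=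
    add_pos_of_pos_of_nonneg (mul_pos hfr₀ hB₀) zero_le_of_contsAux_b
  set X := ifp.fr⁻¹ * (of ξ).dens n + ((of ξ).contsAux n).b
  calc 0 < 1 / X := by positivity
    _ = ((-1) ^ n) ^ 2 / X := by rw [← pow_mul, pow_mul']; norm_num
    _ = (-1) ^ n * convErr ξ n := by rw [convErr_eq_dens_mul_sub_convs, h]; field_simp

theorem abs_convErr_le (hξ : Irrational ξ) (n : ℕ) : |convErr ξ n| ≤ 1 / (of ξ).dens (n + 1) := by
  have hB₀ : 0 < (of ξ).dens n := (one_le_dens n).trans_lt' one_pos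
  calc |convErr ξ n| = (of ξ).dens n * |ξ - (of ξ).convs n| := by
        rw [convErr_eq_dens_mul_sub_convs, abs_mul, abs_of_pos hB₀]
    _ ≤ (of ξ).dens n * (1 / ((of ξ).dens n * (of ξ).dens (n + 1))) :=
        mul_le_mul_of_nonneg_left (abs_sub_convs_le (not_terminatedAt_of_irrational hξ n)) hB₀.le
    _ = 1 / (of ξ).dens (n + 1) := by field_simp

theorem repr1_dens_mul (hξ : Irrational ξ) {n : ℕ} (h : 2 < (of ξ).dens (n + 1)) :
    repr1 ((of ξ).dens n * ξ) = convErr ξ n := by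
  obtain ⟨z, hz⟩ := exists_int_eq_nums hξ n
  refine repr1_eq_of_eq_intCast_add z (by rw [convErr, hz]; ring) ?_
  have hsmall : 1 / (of ξ).dens (n + 1) < 1 / 2 := one_div_lt_one_div_of_lt two_pos h
  have := abs_le.mp (abs_convErr_le hξ n)
  exact ⟨by linarith, by linarith⟩

end GenContFract

open GenContFract

/-- Let `α ∈ (0,1/4)` be irrational, with continued fraction convergent denominators
`q_s`. If `0 ≤ b_s ≤ ⌊q_{s+1}/q_s⌋` for `1 ≤ s ≤ S`, then `Σ_{s=1}^S b_s ⟨q_s α⟩`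
lies in `[-1/2, 1/2)`, and hence equals `⟨(Σ_{s=1}^S b_s q_s) α⟩`. -/
theorem stmt6 (α : ℝ) (hirr : Irrational α) (hα : α ∈ Set.Ioo (0 : ℝ) (1/4))
    (q : ℕ → ℝ) (hq : ∀ s, q s = (GenContFract.of α).dens s)
    (S : ℕ) (b : ℕ → ℤ)
    (hb : ∀ s, 1 ≤ s → s ≤ S → 0 ≤ b s ∧ (b s : ℝ) ≤ ⌊q (s + 1) / q s⌋) :
    (∑ s ∈ Finset.Icc 1 S, (b s : ℝ) * repr1 (q s * α)) ∈
        Set.Ico (-(1/2) : ℝ) (1/2) ∧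
      repr1 ((∑ s ∈ Finset.Icc 1 S, (b s : ℝ) * q s) * α) =
        ∑ s ∈ Finset.Icc 1 S, (b s : ℝ) * repr1 (q s * α) := by
  obtain ⟨hα₀, hα₁⟩ := hα
  simp only [hq] at hb ⊢
  have hden : ∀ n, 4 ≤ (of α).dens (n + 1) := by
    have h₁ : (4 : ℝ) ≤ (of α).dens 1 := by
      rw [dens_one_eq_floor_inv hα₀ (by linarith)]
      exact_mod_cast Int.le_floor.mpr (by rw [le_inv_comm₀ (by norm_num) hα₀]; push_cast; linarith)
    have hmono : Monotone (of α).dens := monotone_nat_of_le_succ fun _ => of_den_mono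
    exact fun n => h₁.trans (hmono (by omega))
  have hlt : ∀ n, (of α).dens n < (of α).dens (n + 1)
    | 0 => by linarith [hden 0, zeroth_den_eq_one (g := of α)]
    | n + 1 => dens_lt_dens_add_two hirr n
  have hsmall (n : ℕ) : |convErr α n| ≤ 1 / 4 :=
    (abs_convErr_le hirr n).trans (one_div_le_one_div_of_le four_pos (hden n))
  have hrepr (n : ℕ) : repr1 ((of α).dens n * α) = convErr α n :=
    repr1_dens_mul hirr (by linarith [hden n])
  have hsplit := sum_mul_eq_intCast_add_sum_mul_repr1 (Finset.Icc 1 S) b fun s => (of α).dens s * α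
  simp only [hrepr] at hsplit ⊢
  have hT := sum_Icc_mul_mem_Icc_of_alternating
    (fun n => (neg_one_pow_mul_convErr_pos hirr n).le)
    (fun n => convErr_add_two hirr (hlt n)) S
    fun s h₁ h₂ => ⟨by exact_mod_cast (hb s h₁ h₂).1, (hb s h₁ h₂).2⟩
  have hT' : ∑ s ∈ Finset.Icc 1 S, (b s : ℝ) * convErr α s ∈ Set.Ico (-(1 / 2)) (1 / 2) := by
    have h₀ := abs_le.mp (hsmall 0)
    have h₁ := abs_le.mp (hsmall 1)
    exact ⟨by linarith [hT.1], by linarith [hT.2]⟩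
  rw [Finset.sum_mul]
  simp only [mul_assoc]
  rw [hsplit]
  exact ⟨hT', repr1_eq_of_eq_intCast_add _ rfl hT'⟩
end

section
/- Let r₁ < r₂ < r₃ be natural numbers (r₁ ≤ r₂ ≤ r₃, r₁ ≠ r₃). There is a constant C depending only on r₃ such that for every 1-periodic C^{r₃} function φ : ℝ → ℝ, ‖φ‖_{r₂} ≤ C ‖φ‖_{r₁}^{(r₃−r₂)/(r₃−r₁)} ‖φ‖_{r₃}^{(r₂−r₁)/(r₃−r₁)}, where ‖φ‖_r = max_{0 ≤ j ≤ r} sup|D^j φ|. -/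
/-!
Write `M j` for the sup norm of the `j`-th derivative; it is finite by periodicity. Landau's
inequality `t * M (k + 1) ≤ 2 * M k + t ^ 2 * M (k + 2)` for all `t > 0` gives
`M (k + 1) ^ 2 ≤ 8 * M k * M (k + 2)`, so `k ↦ log M k + log 3 * k ^ 2` is a convex sequence,
which interpolates `M (r₁ + i)` between `M r₁` and `M r₃` with exponents `1 - i / n`, `i / n`
(`n = r₃ - r₁`). Adding `‖φ‖_{r₁}` to every `M j` keeps Landau's inequality and makes the
logarithms finite. Since `‖φ‖_{r₁} ≤ ‖φ‖_{r₃}`, the exponent `i / n` may then be raised to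
`(r₂ - r₁) / n`.
-/

/-- C^r norm: max over `0 ≤ j ≤ r` of the sup norm of `D^j φ`. -/
noncomputable def Cnorm (r : ℕ) (φ : ℝ → ℝ) : ℝ :=
  ⨆ j : Fin (r + 1), ⨆ x : ℝ, |iteratedDeriv j φ x|

open Function Finset

namespace Function.Periodic

variable {𝕜 F : Type*} [NontriviallyNormedField 𝕜] [NormedAddCommGroup F] [NormedSpace 𝕜 F]
  {f : 𝕜 → F} {c : 𝕜}

protected theorem deriv (hf : Periodic f c) : Periodic (deriv f) c := fun x => by
  rw [← deriv_comp_add_const, show (fun y => f (y + c)) = f from funext hf]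

protected theorem iteratedDeriv (hf : Periodic f c) (n : ℕ) :
    Periodic (iteratedDeriv n f) c := by
  induction n with
  | zero => simpa
  | succ n ih => simpa [iteratedDeriv_succ] using ih.deriv

end Function.Periodic

theorem sq_le_of_forall_pos_mul_le {a b c : ℝ} (ha : 0 ≤ a) (hb : 0 ≤ b) (hc : 0 ≤ c)
    (h : ∀ t > 0, t * a ≤ b + t ^ 2 * c) : a ^ 2 ≤ 4 * b * c := by
  rcases ha.eq_or_lt with rfl | ha
  · rw [zero_pow two_ne_zero]; positivity
  rcases hc.eq_or_lt with rfl | hc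
  · have := h ((b + 1) / a) (by positivity)
    rw [div_mul_cancel₀ _ ha.ne'] at this
    linarith
  · have := h (a / (2 * c)) (by positivity)
    field_simp at this
    nlinarith

theorem mul_abs_deriv_le {g : ℝ → ℝ} (hg : Differentiable ℝ g) (hg' : Differentiable ℝ (deriv g))
    {A B : ℝ} (hA : ∀ x, |g x| ≤ A) (hB : ∀ x, |deriv (deriv g) x| ≤ B)
    {t : ℝ} (ht : 0 < t) (x : ℝ) : t * |deriv g x| ≤ 2 * A + t ^ 2 * B := by
  have lip : ∀ y, |deriv g y - deriv g x| ≤ B * |y - x| := fun y =>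
    convex_univ.norm_image_sub_le_of_norm_deriv_le (fun z _ => hg' z) (fun z _ => hB z)
      (Set.mem_univ x) (Set.mem_univ y)
  have taylor :
      |g (x + t) - (x + t) * deriv g x - (g x - x * deriv g x)| ≤ B * t * |x + t - x| := by
    refine (convex_Icc x (x + t)).norm_image_sub_le_of_norm_hasDerivWithin_le
      (f := fun y => g y - y * deriv g x)
      (fun z _ => ((hg z).hasDerivAt.sub ((hasDerivAt_id z).mul_const _)).hasDerivWithinAt)
      (fun z hz => ?_) (Set.left_mem_Icc.2 (by linarith)) (Set.right_mem_Icc.2 (by linarith))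
    calc |deriv g z - 1 * deriv g x| ≤ B * |z - x| := by rw [one_mul]; exact lip z
      _ ≤ B * t := by
        gcongr
        · exact (abs_nonneg _).trans (hB x)
        · rw [abs_le]; constructor <;> linarith [hz.1, hz.2]
  rw [add_sub_cancel_left, abs_of_pos ht] at taylor
  have e : g (x + t) - g x - (g (x + t) - (x + t) * deriv g x - (g x - x * deriv g x)) =
      t * deriv g x := by ring
  rw [← abs_of_pos ht, ← abs_mul, ← e, abs_of_pos ht]
  refine (abs_sub _ _).trans ?_
  linarith [abs_sub (g (x + t)) (g x), hA x, hA (x + t)]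

theorem mul_le_of_convex_seq {v : ℕ → ℝ} {n : ℕ}
    (hv : ∀ k, k + 2 ≤ n → 2 * v (k + 1) ≤ v k + v (k + 2)) {j : ℕ} (hj : j ≤ n) :
    n * v j ≤ (n - j) * v 0 + j * v n := by
  set d : ℕ → ℝ := fun k => v (k + 1) - v k
  have hd : MonotoneOn d (Set.Iio n) :=
    monotoneOn_of_le_succ Set.ordConnected_Iio fun k _ _ hk => by
      rw [Order.succ_eq_add_one, Set.mem_Iio] at hk
      simp only [d, Order.succ_eq_add_one]
      linarith [hv k (by omega)]
  have hleft : v j - v 0 = ∑ k ∈ range j, d k := (sum_range_sub v j).symm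
  have hright : v n - v j = ∑ l ∈ Ico j n, d l := by
    rw [sum_Ico_eq_sub _ hj, sum_range_sub, sum_range_sub]; ring
  have key : ((n : ℝ) - j) * (v j - v 0) ≤ j * (v n - v j) :=
    calc ((n : ℝ) - j) * (v j - v 0) = ∑ k ∈ range j, ∑ _l ∈ Ico j n, d k := by
          simp [hleft, mul_sum, Nat.cast_sub hj]
      _ ≤ ∑ _k ∈ range j, ∑ l ∈ Ico j n, d l :=
          sum_le_sum fun k hk => sum_le_sum fun l hl => by
            simp only [mem_range, mem_Ico] at hk hl
            exact hd (Set.mem_Iio.2 (by omega)) (Set.mem_Iio.2 hl.2) (by omega)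
      _ = j * (v n - v j) := by simp [hright]
  linear_combination key

theorem le_mul_rpow_mul_rpow_of_sq_le {a : ℕ → ℝ} {n : ℕ} {K : ℝ} (hK : 0 < K)
    (ha : ∀ k ≤ n, 0 < a k) (h : ∀ k, k + 2 ≤ n → a (k + 1) ^ 2 ≤ K ^ 2 * (a k * a (k + 2)))
    {j : ℕ} (hj : j ≤ n) :
    a j ≤ K ^ (j * (n - j)) * a 0 ^ (1 - (j : ℝ) / n) * a n ^ ((j : ℝ) / n) := by
  rcases Nat.eq_zero_or_pos n with rfl | hn
  · obtain rfl : j = 0 := Nat.le_zero.1 hj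
    simp
  set v : ℕ → ℝ := fun k => Real.log (a k) + Real.log K * (k : ℝ) ^ 2
  have hconv : ∀ k, k + 2 ≤ n → 2 * v (k + 1) ≤ v k + v (k + 2) := by
    intro k hk
    have hlog := Real.log_le_log (pow_pos (ha (k + 1) (by omega)) 2) (h k hk)
    rw [Real.log_mul (by positivity) (mul_pos (ha k (by omega)) (ha (k + 2) hk)).ne',
      Real.log_mul (ha k (by omega)).ne' (ha (k + 2) hk).ne', Real.log_pow, Real.log_pow] at hlog
    simp only [v]
    push_cast at hlog ⊢
    linear_combination hlog
  have key := mul_le_of_convex_seq hconv hj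
  have hn' : (0 : ℝ) < n := Nat.cast_pos.2 hn
  have ha₀ := Real.rpow_pos_of_pos (ha 0 (Nat.zero_le n)) (1 - (j : ℝ) / n)
  have haₙ := Real.rpow_pos_of_pos (ha n le_rfl) ((j : ℝ) / n)
  have hKj := pow_pos hK (j * (n - j))
  rw [← Real.log_le_log_iff (ha j hj) (by positivity), Real.log_mul (by positivity) haₙ.ne',
    Real.log_mul hKj.ne' ha₀.ne', Real.log_pow, Real.log_rpow (ha 0 (Nat.zero_le n)),
    Real.log_rpow (ha n le_rfl)]
  rw [← mul_le_mul_iff_right₀ hn']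
  push_cast [Nat.cast_sub hj] at key ⊢
  field_simp
  linear_combination key

theorem rpow_one_sub_mul_rpow_le {x y s t : ℝ} (hx : 0 < x) (hxy : x ≤ y) (hst : s ≤ t) :
    x ^ (1 - s) * y ^ s ≤ x ^ (1 - t) * y ^ t := by
  have key : ∀ r : ℝ, x ^ (1 - r) * y ^ r = x * (y / x) ^ r := fun r => by
    rw [Real.div_rpow (hx.le.trans hxy) hx.le, Real.rpow_sub hx, Real.rpow_one]
    field_simp
  rw [key, key]
  gcongr
  · exact (one_le_div hx).2 hxy

noncomputable def derivSup (j : ℕ) (φ : ℝ → ℝ) : ℝ := ⨆ x, |iteratedDeriv j φ x|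

section derivSup

variable {φ : ℝ → ℝ}

theorem derivSup_nonneg (j : ℕ) (φ : ℝ → ℝ) : 0 ≤ derivSup j φ :=
  Real.iSup_nonneg fun _ => abs_nonneg _

theorem abs_iteratedDeriv_le_derivSup {c : ℝ} (hp : Periodic φ c) (hc : c ≠ 0) {j : ℕ}
    (hj : Continuous (iteratedDeriv j φ)) (x : ℝ) : |iteratedDeriv j φ x| ≤ derivSup j φ :=
  le_ciSup ((hp.iteratedDeriv j).comp abs |>.isBounded_of_continuous hc hj.abs).bddAbove x

theorem mul_derivSup_succ_le {c : ℝ} (hp : Periodic φ c) (hc : c ≠ 0) {k : ℕ}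
    (hφ : ContDiff ℝ (k + 2) φ) {t : ℝ} (ht : 0 < t) :
    t * derivSup (k + 1) φ ≤ 2 * derivSup k φ + t ^ 2 * derivSup (k + 2) φ := by
  have hA :=
    abs_iteratedDeriv_le_derivSup hp hc (hφ.continuous_iteratedDeriv k (by norm_cast; omega))
  have hB := abs_iteratedDeriv_le_derivSup hp hc (hφ.continuous_iteratedDeriv (k + 2) le_rfl)
  have hg := hφ.differentiable_iteratedDeriv k (by norm_cast; omega)
  have hg' := hφ.differentiable_iteratedDeriv (k + 1) (by norm_cast; omega)
  simp only [iteratedDeriv_succ] at hB hg'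
  refine (le_div_iff₀' ht).1 (ciSup_le fun x => (le_div_iff₀' ht).2 ?_)
  rw [iteratedDeriv_succ]
  exact mul_abs_deriv_le hg hg' hA hB ht x

theorem derivSup_le_Cnorm {j r : ℕ} (hj : j ≤ r) : derivSup j φ ≤ Cnorm r φ :=
  le_ciSup (f := fun i : Fin (r + 1) => derivSup i φ) (Set.finite_range _).bddAbove ⟨j, by omega⟩

theorem Cnorm_le {r : ℕ} {X : ℝ} (h : ∀ j ≤ r, derivSup j φ ≤ X) : Cnorm r φ ≤ X :=
  ciSup_le fun j => h j (Nat.lt_succ_iff.1 j.isLt)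

theorem Cnorm_nonneg (r : ℕ) (φ : ℝ → ℝ) : 0 ≤ Cnorm r φ :=
  (derivSup_nonneg 0 φ).trans (derivSup_le_Cnorm (Nat.zero_le r))

theorem Cnorm_mono {r s : ℕ} (hrs : r ≤ s) : Cnorm r φ ≤ Cnorm s φ :=
  Cnorm_le fun _ hj => derivSup_le_Cnorm (hj.trans hrs)

theorem Cnorm_zero (r : ℕ) : Cnorm r 0 = 0 := by
  simp [Cnorm]

theorem eq_zero_of_Cnorm_eq_zero {c : ℝ} (hp : Periodic φ c) (hc : c ≠ 0) (hφ : Continuous φ)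
    {r : ℕ} (h : Cnorm r φ = 0) : φ = 0 := by
  funext x
  have := (abs_iteratedDeriv_le_derivSup hp hc (j := 0) (by simpa using hφ) x).trans
    ((derivSup_le_Cnorm (Nat.zero_le r)).trans h.le)
  simpa using this

theorem derivSup_add_le {c : ℝ} (hp : Periodic φ c) (hc : c ≠ 0) {r n i : ℕ}
    (hφ : ContDiff ℝ (r + n : ℕ) φ) (hpos : 0 < Cnorm r φ) (hi : i ≤ n) :
    derivSup (r + i) φ ≤
      2 * 3 ^ (n * n) * (Cnorm r φ ^ (1 - (i : ℝ) / n) * Cnorm (r + n) φ ^ ((i : ℝ) / n)) := by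
  set N := Cnorm r φ
  set a : ℕ → ℝ := fun k => derivSup (r + k) φ + N
  have ha : ∀ k, 0 < a k := fun k => add_pos_of_nonneg_of_pos (derivSup_nonneg _ _) hpos
  have hsq : ∀ k, k + 2 ≤ n → a (k + 1) ^ 2 ≤ 3 ^ 2 * (a k * a (k + 2)) := by
    intro k hk
    have h8 : a (k + 1) ^ 2 ≤ 4 * (2 * a k) * a (k + 2) :=
      sq_le_of_forall_pos_mul_le (ha _).le (by linarith [ha k]) (ha _).le fun t ht => by
        have := mul_derivSup_succ_le hp hc (k := r + k) (hφ.of_le (by norm_cast; omega)) ht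
        rw [add_assoc, add_assoc] at this
        simp only [a]
        nlinarith [sq_nonneg (t - 1)]
    nlinarith [mul_pos (ha k) (ha (k + 2))]
  have h₀ : a 0 ≤ 2 * N := by
    simp only [a, add_zero]
    linarith [derivSup_le_Cnorm (φ := φ) (le_refl r)]
  have hₙ : a n ≤ 2 * Cnorm (r + n) φ := by
    linarith [derivSup_le_Cnorm (φ := φ) (le_refl (r + n)),
      Cnorm_mono (φ := φ) (Nat.le_add_right r n)]
  set s : ℝ := (i : ℝ) / n
  have hs : 0 ≤ s := by positivity
  have hs1 : 0 ≤ 1 - s := sub_nonneg.2 (div_le_one_of_le₀ (by exact_mod_cast hi) (by positivity))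
  have htwo : (2 : ℝ) ^ (1 - s) * 2 ^ s = 2 := by
    rw [← Real.rpow_add two_pos, sub_add_cancel, Real.rpow_one]
  calc derivSup (r + i) φ ≤ a i := le_add_of_nonneg_right hpos.le
    _ ≤ 3 ^ (i * (n - i)) * a 0 ^ (1 - s) * a n ^ s :=
      le_mul_rpow_mul_rpow_of_sq_le three_pos (fun k _ => ha k) hsq hi
    _ ≤ 3 ^ (i * (n - i)) * (2 * N) ^ (1 - s) * (2 * Cnorm (r + n) φ) ^ s := by
      gcongr
      exacts [Real.rpow_nonneg (ha n).le s, (ha 0).le, (ha n).le]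
    _ = 2 * 3 ^ (i * (n - i)) * (N ^ (1 - s) * Cnorm (r + n) φ ^ s) := by
      rw [Real.mul_rpow two_pos.le hpos.le, Real.mul_rpow two_pos.le (hpos.trans_le
        (Cnorm_mono (Nat.le_add_right r n))).le]
      linear_combination (3 ^ (i * (n - i)) * N ^ (1 - s) * Cnorm (r + n) φ ^ s) * htwo
    _ ≤ 2 * 3 ^ (n * n) * (N ^ (1 - s) * Cnorm (r + n) φ ^ s) := by
      refine mul_le_mul_of_nonneg_right (mul_le_mul_of_nonneg_left ?_ two_pos.le)
        (mul_nonneg (Real.rpow_nonneg hpos.le _) (Real.rpow_nonneg (Cnorm_nonneg _ _) _))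
      exact pow_le_pow_right₀ (by norm_num) (Nat.mul_le_mul hi (Nat.sub_le n i))

theorem Cnorm_add_le {c : ℝ} (hp : Periodic φ c) (hc : c ≠ 0) {r m n : ℕ}
    (hφ : ContDiff ℝ (r + n : ℕ) φ) (hmn : m ≤ n) :
    Cnorm (r + m) φ ≤
      2 * 3 ^ (n * n) * Cnorm r φ ^ (1 - (m : ℝ) / n) * Cnorm (r + n) φ ^ ((m : ℝ) / n) := by
  rcases (Cnorm_nonneg r φ).eq_or_lt with h0 | hpos
  · obtain rfl := eq_zero_of_Cnorm_eq_zero hp hc hφ.continuous h0.symm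
    simp only [Cnorm_zero]
    positivity
  have hinterp := fun {s : ℝ} (hs : s ≤ m / n) =>
    rpow_one_sub_mul_rpow_le hpos (Cnorm_mono (φ := φ) (Nat.le_add_right r n)) hs
  refine Cnorm_le fun j hj => ?_
  rw [mul_assoc]
  rcases le_or_gt j r with hjr | hjr
  · have hC : (1 : ℝ) ≤ 2 * 3 ^ (n * n) := by
      linarith [one_le_pow₀ (by norm_num : (1 : ℝ) ≤ 3) (n := n * n)]
    calc derivSup j φ ≤ Cnorm r φ ^ (1 - 0 : ℝ) * Cnorm (r + n) φ ^ (0 : ℝ) := by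
          simpa using derivSup_le_Cnorm hjr
      _ ≤ Cnorm r φ ^ (1 - (m : ℝ) / n) * Cnorm (r + n) φ ^ ((m : ℝ) / n) := hinterp (by positivity)
      _ ≤ _ := le_mul_of_one_le_left
          (mul_nonneg (Real.rpow_nonneg hpos.le _) (Real.rpow_nonneg (Cnorm_nonneg _ _) _)) hC
  · obtain ⟨i, rfl⟩ : ∃ i, j = r + i := ⟨j - r, by omega⟩
    refine (derivSup_add_le hp hc hφ hpos (by omega)).trans
      (mul_le_mul_of_nonneg_left (hinterp ?_) (by positivity))
    gcongr
    omega

end derivSup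

/-- Hadamard's convexity inequalities: for `r₁ ≤ r₂ ≤ r₃`, `r₁ ≠ r₃`, there is `C`
depending only on `r₃` such that every 1-periodic `C^{r₃}` function `φ` satisfies
`‖φ‖_{r₂} ≤ C ‖φ‖_{r₁}^{(r₃-r₂)/(r₃-r₁)} ‖φ‖_{r₃}^{(r₂-r₁)/(r₃-r₁)}`. -/
theorem stmt9 (r₁ r₂ r₃ : ℕ) (h12 : r₁ ≤ r₂) (h23 : r₂ ≤ r₃) (h13 : r₁ ≠ r₃) :
    ∃ C : ℝ, 0 < C ∧ ∀ φ : ℝ → ℝ, Function.Periodic φ 1 → ContDiff ℝ r₃ φ →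
      Cnorm r₂ φ ≤ C * Cnorm r₁ φ ^ (((r₃ : ℝ) - r₂) / ((r₃ : ℝ) - r₁)) *
        Cnorm r₃ φ ^ (((r₂ : ℝ) - r₁) / ((r₃ : ℝ) - r₁)) := by
  obtain ⟨m, rfl⟩ : ∃ m, r₂ = r₁ + m := ⟨r₂ - r₁, by omega⟩
  obtain ⟨n, rfl⟩ : ∃ n, r₃ = r₁ + n := ⟨r₃ - r₁, by omega⟩
  have hn : (n : ℝ) ≠ 0 := by norm_cast; omega
  refine ⟨2 * 3 ^ (n * n), by positivity, fun φ hp hφ => ?_⟩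
  convert Cnorm_add_le hp one_ne_zero hφ (by omega : m ≤ n) using 4 <;>
    simp only [Nat.cast_add, add_sub_cancel_left, add_sub_add_left_eq_sub]
  field_simp
end
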